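/- Let ω₊⁰ ≥ ω₋⁰ > 0 and b⁰ ∈ ℝ with ω₊⁰ω₋⁰ > 4(b⁰)². Set δ := ω₊⁰ − ω₋⁰, σ := ω₊⁰ + ω₋⁰, and τ := √(σ² − 16(b⁰)²) > 0. Define h_t(x) := ((τ+x)(τ+σ) + (τ−x)(σ−τ) e^{−4τt}) / (2(τ+σ+(τ−σ)e^{−4τt})). Then ω₋(t) := h_t(−δ), ω₊(t) := h_t(δ), and b(t)² := 4τ²(b⁰)² e^{−4τt}/(σ+τ+(τ−σ)e^{−4τt})² solve ∂ₜω₋ = −16b², ∂ₜω₊ = −16b², ∂ₜb = −2(ω₋+ω₊)b on [0,∞) with the given initial data, and as t → ∞, ω±(t) → (τ±δ)/2 and b(t) → 0 exponentially fast. -/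

import Mathlib

open Filter

/-- `τ := √(σ² − 16(b⁰)²)` with `σ := ω₊⁰ + ω₋⁰`. -/
noncomputable def tau5 (w m b0 : ℝ) : ℝ := Real.sqrt ((w + m) ^ 2 - 16 * b0 ^ 2)

/-- `h_t(x) := ((τ+x)(τ+σ) + (τ−x)(σ−τ)e^{−4τt}) / (2(τ+σ+(τ−σ)e^{−4τt}))`. -/
noncomputable def h5 (w m b0 : ℝ) (x t : ℝ) : ℝ :=
  ((tau5 w m b0 + x) * (tau5 w m b0 + (w + m)) +
      (tau5 w m b0 - x) * ((w + m) - tau5 w m b0) * Real.exp (-(4 * tau5 w m b0 * t))) /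
    (2 * (tau5 w m b0 + (w + m) + (tau5 w m b0 - (w + m)) * Real.exp (-(4 * tau5 w m b0 * t))))

/-- `ω₋(t) := h_t(−δ)` with `δ := ω₊⁰ − ω₋⁰`. -/
noncomputable def w5m (w m b0 : ℝ) (t : ℝ) : ℝ := h5 w m b0 (-(w - m)) t

/-- `ω₊(t) := h_t(δ)`. -/
noncomputable def w5p (w m b0 : ℝ) (t : ℝ) : ℝ := h5 w m b0 (w - m) t

/-- `b(t)` with `b(t)² = 4τ²(b⁰)²e^{−4τt}/(σ+τ+(τ−σ)e^{−4τt})²`. -/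
noncomputable def b5 (w m b0 : ℝ) (t : ℝ) : ℝ :=
  2 * tau5 w m b0 * b0 * Real.exp (-(2 * tau5 w m b0 * t)) /
    ((w + m) + tau5 w m b0 + (tau5 w m b0 - (w + m)) * Real.exp (-(4 * tau5 w m b0 * t)))

/-! Writing `E = e^{−4τt}` and `D = τ + σ + (τ − σ)E`, one has
`h_t(x) = (τ + x)/2 + τ(σ − τ)E/D` for every `x`, so `ω₋` and `ω₊` differ from their limits by
the same term, and `b = 2τb⁰e^{−2τt}/D`. Because `τ² = σ² − 16(b⁰)²`, differentiating these
closed forms gives the flow equations. For `t ≥ 0` and `0 < τ ≤ σ` we have `D ≥ 2τ`, which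
yields the exponential bounds, and the limits follow from them. -/

open Real Topology

noncomputable def flowDenom (τ σ t : ℝ) : ℝ := τ + σ + (τ - σ) * exp (-(4 * τ * t))

noncomputable def flowExcess (τ σ t : ℝ) : ℝ := τ * (σ - τ) * exp (-(4 * τ * t)) / flowDenom τ σ t

noncomputable def flowB (τ σ β t : ℝ) : ℝ := β * exp (-(2 * τ * t)) / flowDenom τ σ t

lemma hasDerivAt_exp_neg_mul (c t : ℝ) :
    HasDerivAt (fun s => exp (-(c * s))) (-c * exp (-(c * t))) t := by
  simpa [mul_comm] using ((hasDerivAt_id t).const_mul c).neg.exp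

lemma exp_neg_two_mul_sq (τ t : ℝ) : exp (-(2 * τ * t)) ^ 2 = exp (-(4 * τ * t)) := by
  rw [← exp_nat_mul]; congr 1; push_cast; ring

lemma tendsto_of_abs_sub_le_mul_exp {f : ℝ → ℝ} {L C k : ℝ} (hk : 0 < k)
    (h : ∀ t ∈ Set.Ici (0 : ℝ), |f t - L| ≤ C * exp (-(k * t))) :
    Tendsto f atTop (𝓝 L) := by
  have hexp : Tendsto (fun t => C * exp (-(k * t))) atTop (𝓝 0) := by
    simpa using (tendsto_exp_neg_atTop_nhds_zero.comp
      (tendsto_id.const_mul_atTop hk)).const_mul C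
  rw [tendsto_iff_norm_sub_tendsto_zero]
  exact squeeze_zero' (Eventually.of_forall fun t => norm_nonneg _)
    ((eventually_ge_atTop 0).mono fun t ht => h t ht) hexp

section Flow

variable {τ σ β t : ℝ}

lemma hasDerivAt_flowDenom (τ σ t : ℝ) :
    HasDerivAt (flowDenom τ σ) ((τ - σ) * (-(4 * τ) * exp (-(4 * τ * t)))) t :=
  ((hasDerivAt_exp_neg_mul (4 * τ) t).const_mul (τ - σ)).const_add (τ + σ)

lemma two_mul_le_flowDenom (hτ : 0 ≤ τ) (hτσ : τ ≤ σ) (ht : 0 ≤ t) :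
    2 * τ ≤ flowDenom τ σ t := by
  have hE : exp (-(4 * τ * t)) ≤ 1 := exp_le_one_iff.2 (by nlinarith)
  unfold flowDenom
  nlinarith

lemma flowDenom_zero : flowDenom τ σ 0 = 2 * τ := by
  simp only [flowDenom, mul_zero, neg_zero, exp_zero, mul_one]; ring

lemma flowExcess_zero (hτ : τ ≠ 0) : flowExcess τ σ 0 = (σ - τ) / 2 := by
  rw [flowExcess, flowDenom_zero]
  simp only [mul_zero, neg_zero, exp_zero, mul_one]
  field_simp

lemma flowB_zero : flowB τ σ β 0 = β / (2 * τ) := by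
  simp [flowB, flowDenom_zero]

/-- `hβ` is the relation `β = 2τb⁰` satisfies when `τ² = σ² − 16(b⁰)²`. -/
lemma hasDerivAt_flowExcess (hβ : 4 * β ^ 2 = τ ^ 2 * (σ ^ 2 - τ ^ 2))
    (hD : flowDenom τ σ t ≠ 0) :
    HasDerivAt (flowExcess τ σ) (-16 * flowB τ σ β t ^ 2) t := by
  have h := ((hasDerivAt_exp_neg_mul (4 * τ) t).const_mul (τ * (σ - τ))).div
    (hasDerivAt_flowDenom τ σ t) hD
  refine h.congr_deriv ?_
  have hDE : flowDenom τ σ t = τ + σ + (τ - σ) * exp (-(4 * τ * t)) := rfl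
  rw [flowB, div_pow, mul_pow, exp_neg_two_mul_sq, mul_div_assoc']
  congr 1
  linear_combination 4 * exp (-(4 * τ * t)) * hβ - 4 * τ ^ 2 * (σ - τ) * exp (-(4 * τ * t)) * hDE

lemma hasDerivAt_flowB (hD : flowDenom τ σ t ≠ 0) :
    HasDerivAt (flowB τ σ β) (-2 * (τ + 2 * flowExcess τ σ t) * flowB τ σ β t) t := by
  have h := ((hasDerivAt_exp_neg_mul (2 * τ) t).const_mul β).div
    (hasDerivAt_flowDenom τ σ t) hD
  refine h.congr_deriv ?_
  rw [flowB, flowExcess]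
  field_simp
  ring

lemma abs_flowExcess_le (hτ : 0 < τ) (hτσ : τ ≤ σ) (ht : 0 ≤ t) :
    |flowExcess τ σ t| ≤ (σ - τ) / 2 * exp (-(4 * τ * t)) := by
  have hD := two_mul_le_flowDenom hτ.le hτσ ht
  have hE := exp_pos (-(4 * τ * t))
  have hnum : 0 ≤ τ * (σ - τ) * exp (-(4 * τ * t)) :=
    mul_nonneg (mul_nonneg hτ.le (sub_nonneg.2 hτσ)) hE.le
  rw [flowExcess, abs_of_nonneg (div_nonneg hnum (by linarith)), div_le_iff₀ (by linarith)]
  nlinarith [mul_nonneg (mul_nonneg (sub_nonneg.2 hτσ) hE.le) (sub_nonneg.2 hD)]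

lemma abs_flowB_le (hτ : 0 < τ) (hτσ : τ ≤ σ) (ht : 0 ≤ t) :
    |flowB τ σ β t| ≤ |β| / (2 * τ) * exp (-(2 * τ * t)) := by
  have hD := two_mul_le_flowDenom hτ.le hτσ ht
  rw [flowB, abs_div, abs_mul, abs_of_pos (exp_pos _),
    abs_of_pos (show 0 < flowDenom τ σ t by linarith), div_mul_eq_mul_div]
  exact div_le_div_of_nonneg_left (by positivity) (by positivity) hD

end Flow

section ClosedForm

variable {w m b0 : ℝ}

lemma tau5_sq (hcond : 4 * b0 ^ 2 < w * m) : tau5 w m b0 ^ 2 = (w + m) ^ 2 - 16 * b0 ^ 2 := by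
  rw [tau5, sq_sqrt]; nlinarith [sq_nonneg (w - m)]

lemma tau5_pos (hcond : 4 * b0 ^ 2 < w * m) : 0 < tau5 w m b0 :=
  sqrt_pos.2 (by nlinarith [sq_nonneg (w - m)])

lemma tau5_le (hm : 0 < m) (hcond : 4 * b0 ^ 2 < w * m) : tau5 w m b0 ≤ w + m := by
  have hw : 0 < w := pos_of_mul_pos_left (by nlinarith [sq_nonneg b0]) hm.le
  rw [tau5, sqrt_le_left (by linarith)]
  nlinarith [sq_nonneg b0]

lemma flowDenom_tau5_ne_zero (hm : 0 < m) (hcond : 4 * b0 ^ 2 < w * m) (ht : 0 ≤ t) :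
    flowDenom (tau5 w m b0) (w + m) t ≠ 0 :=
  ((two_mul_le_flowDenom (tau5_pos hcond).le (tau5_le hm hcond) ht).trans_lt'
    (by linarith [tau5_pos hcond])).ne'

lemma h5_eq (x : ℝ) (hD : flowDenom (tau5 w m b0) (w + m) t ≠ 0) :
    h5 w m b0 x t = (tau5 w m b0 + x) / 2 + flowExcess (tau5 w m b0) (w + m) t := by
  rw [h5, flowExcess]
  unfold flowDenom at hD ⊢
  set τ := tau5 w m b0
  rw [div_add_div _ _ two_ne_zero hD, div_eq_div_iff (mul_ne_zero two_ne_zero hD)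
    (mul_ne_zero two_ne_zero hD)]
  ring

lemma h5_eventuallyEq (x : ℝ) (hD : flowDenom (tau5 w m b0) (w + m) t ≠ 0) :
    h5 w m b0 x =ᶠ[𝓝 t] fun s => (tau5 w m b0 + x) / 2 + flowExcess (tau5 w m b0) (w + m) s :=
  ((hasDerivAt_flowDenom _ _ t).continuousAt.eventually_ne hD).mono fun _ hs => h5_eq x hs

lemma h5_zero (x : ℝ) (hcond : 4 * b0 ^ 2 < w * m) : h5 w m b0 x 0 = (w + m + x) / 2 := by
  have hτ := tau5_pos hcond
  rw [h5_eq x (by rw [flowDenom_zero]; positivity), flowExcess_zero hτ.ne']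
  ring

lemma abs_h5_sub_le (x : ℝ) (hm : 0 < m) (hcond : 4 * b0 ^ 2 < w * m) (ht : 0 ≤ t) :
    |h5 w m b0 x t - (tau5 w m b0 + x) / 2| ≤
      (w + m - tau5 w m b0) / 2 * exp (-(4 * tau5 w m b0 * t)) := by
  rw [h5_eq x (flowDenom_tau5_ne_zero hm hcond ht), add_sub_cancel_left]
  exact abs_flowExcess_le (tau5_pos hcond) (tau5_le hm hcond) ht

lemma b5_eq_flowB : b5 w m b0 = flowB (tau5 w m b0) (w + m) (2 * tau5 w m b0 * b0) := by
  funext t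
  rw [b5, flowB, flowDenom, add_comm (w + m) (tau5 w m b0)]

lemma b5_sq (t : ℝ) :
    b5 w m b0 t ^ 2 =
      4 * tau5 w m b0 ^ 2 * b0 ^ 2 * exp (-(4 * tau5 w m b0 * t)) /
        ((w + m) + tau5 w m b0 + (tau5 w m b0 - (w + m)) * exp (-(4 * tau5 w m b0 * t))) ^ 2 := by
  rw [b5, div_pow, mul_pow, mul_pow, mul_pow, exp_neg_two_mul_sq]
  ring

lemma abs_b5_le (hm : 0 < m) (hcond : 4 * b0 ^ 2 < w * m) (ht : 0 ≤ t) :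
    |b5 w m b0 t| ≤ |b0| * exp (-(2 * tau5 w m b0 * t)) := by
  have hτ := tau5_pos hcond
  rw [b5_eq_flowB]
  refine (abs_flowB_le hτ (tau5_le hm hcond) ht).trans_eq ?_
  rw [abs_mul, abs_of_pos (by positivity : (0 : ℝ) < 2 * tau5 w m b0),
    mul_div_cancel_left₀ _ (by positivity)]

lemma w5m_add_w5p (hm : 0 < m) (hcond : 4 * b0 ^ 2 < w * m) (ht : 0 ≤ t) :
    w5m w m b0 t + w5p w m b0 t = tau5 w m b0 + 2 * flowExcess (tau5 w m b0) (w + m) t := by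
  have hD := flowDenom_tau5_ne_zero hm hcond ht
  rw [w5m, w5p, h5_eq _ hD, h5_eq _ hD]
  ring

lemma hasDerivAt_h5 (x : ℝ) (hcond : 4 * b0 ^ 2 < w * m)
    (hD : flowDenom (tau5 w m b0) (w + m) t ≠ 0) :
    HasDerivAt (h5 w m b0 x) (-16 * b5 w m b0 t ^ 2) t := by
  have hβ : 4 * (2 * tau5 w m b0 * b0) ^ 2 =
      tau5 w m b0 ^ 2 * ((w + m) ^ 2 - tau5 w m b0 ^ 2) := by
    linear_combination tau5 w m b0 ^ 2 * tau5_sq hcond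
  rw [b5_eq_flowB]
  exact ((hasDerivAt_flowExcess hβ hD).const_add _).congr_of_eventuallyEq (h5_eventuallyEq x hD)

end ClosedForm

theorem stmt_5_general (w m b0 : ℝ) (hm : 0 < m) (hcond : 4 * b0 ^ 2 < w * m) :
    0 < tau5 w m b0 ∧
    w5m w m b0 0 = m ∧ w5p w m b0 0 = w ∧ b5 w m b0 0 = b0 ∧
    (∀ t ∈ Set.Ici (0 : ℝ),
      (b5 w m b0 t) ^ 2 =
          4 * (tau5 w m b0) ^ 2 * b0 ^ 2 * Real.exp (-(4 * tau5 w m b0 * t)) /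
            ((w + m) + tau5 w m b0 +
                (tau5 w m b0 - (w + m)) * Real.exp (-(4 * tau5 w m b0 * t))) ^ 2 ∧
        HasDerivAt (w5m w m b0) (-16 * (b5 w m b0 t) ^ 2) t ∧
        HasDerivAt (w5p w m b0) (-16 * (b5 w m b0 t) ^ 2) t ∧
        HasDerivAt (b5 w m b0) (-2 * (w5m w m b0 t + w5p w m b0 t) * b5 w m b0 t) t) ∧
    Tendsto (w5m w m b0) atTop (nhds ((tau5 w m b0 - (w - m)) / 2)) ∧
    Tendsto (w5p w m b0) atTop (nhds ((tau5 w m b0 + (w - m)) / 2)) ∧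
    Tendsto (b5 w m b0) atTop (nhds 0) ∧
    ∃ C : ℝ, ∀ t ∈ Set.Ici (0 : ℝ),
      |w5m w m b0 t - (tau5 w m b0 - (w - m)) / 2| ≤ C * Real.exp (-(4 * tau5 w m b0 * t)) ∧
      |w5p w m b0 t - (tau5 w m b0 + (w - m)) / 2| ≤ C * Real.exp (-(4 * tau5 w m b0 * t)) ∧
      |b5 w m b0 t| ≤ C * Real.exp (-(2 * tau5 w m b0 * t)) := by
  have hτ := tau5_pos hcond
  have hD (t : ℝ) (ht : t ∈ Set.Ici (0 : ℝ)) := flowDenom_tau5_ne_zero hm hcond ht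
  set C := max ((w + m - tau5 w m b0) / 2) |b0|
  have hω (x t : ℝ) (ht : t ∈ Set.Ici (0 : ℝ)) :
      |h5 w m b0 x t - (tau5 w m b0 + x) / 2| ≤ C * exp (-(4 * tau5 w m b0 * t)) :=
    (abs_h5_sub_le x hm hcond ht).trans
      (mul_le_mul_of_nonneg_right (le_max_left _ _) (exp_pos _).le)
  have hbound : ∀ t ∈ Set.Ici (0 : ℝ),
      |w5m w m b0 t - (tau5 w m b0 - (w - m)) / 2| ≤ C * exp (-(4 * tau5 w m b0 * t)) ∧
      |w5p w m b0 t - (tau5 w m b0 + (w - m)) / 2| ≤ C * exp (-(4 * tau5 w m b0 * t)) ∧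
      |b5 w m b0 t| ≤ C * exp (-(2 * tau5 w m b0 * t)) := fun t ht =>
    ⟨by rw [w5m, sub_eq_add_neg _ (w - m)]; exact hω _ t ht, hω _ t ht,
      (abs_b5_le hm hcond ht).trans
        (mul_le_mul_of_nonneg_right (le_max_right _ _) (exp_pos _).le)⟩
  refine ⟨hτ, ?_, ?_, ?_, fun t ht => ⟨b5_sq t, hasDerivAt_h5 _ hcond (hD t ht),
    hasDerivAt_h5 _ hcond (hD t ht), ?_⟩,
    tendsto_of_abs_sub_le_mul_exp (by positivity) fun t ht => (hbound t ht).1,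
    tendsto_of_abs_sub_le_mul_exp (by positivity) fun t ht => (hbound t ht).2.1,
    tendsto_of_abs_sub_le_mul_exp (C := C) (k := 2 * tau5 w m b0) (by positivity)
      fun t ht => by simpa using (hbound t ht).2.2,
    C, hbound⟩
  · rw [w5m, h5_zero _ hcond]; ring
  · rw [w5p, h5_zero _ hcond]; ring
  · rw [b5_eq_flowB, flowB_zero]; field_simp
  · rw [w5m_add_w5p hm hcond ht, b5_eq_flowB]
    exact hasDerivAt_flowB (hD t ht)

/-- Example of the flow when `ω₊⁰ω₋⁰ > 4(b⁰)²`: the explicit functions `w5m`, `w5p`, `b5`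
solve the flow equations on `[0,∞)` with initial data `(ω₋⁰, ω₊⁰, b⁰)`, and as `t → ∞`,
`ω±(t) → (τ±δ)/2` and `b(t) → 0` exponentially fast. -/
theorem stmt_5 (w m b0 : ℝ) (hm : 0 < m) (hwm : m ≤ w) (hcond : 4 * b0 ^ 2 < w * m) :
    0 < tau5 w m b0 ∧
    w5m w m b0 0 = m ∧ w5p w m b0 0 = w ∧ b5 w m b0 0 = b0 ∧
    (∀ t ∈ Set.Ici (0 : ℝ),
      (b5 w m b0 t) ^ 2 =
          4 * (tau5 w m b0) ^ 2 * b0 ^ 2 * Real.exp (-(4 * tau5 w m b0 * t)) /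
            ((w + m) + tau5 w m b0 +
                (tau5 w m b0 - (w + m)) * Real.exp (-(4 * tau5 w m b0 * t))) ^ 2 ∧
        HasDerivAt (w5m w m b0) (-16 * (b5 w m b0 t) ^ 2) t ∧
        HasDerivAt (w5p w m b0) (-16 * (b5 w m b0 t) ^ 2) t ∧
        HasDerivAt (b5 w m b0) (-2 * (w5m w m b0 t + w5p w m b0 t) * b5 w m b0 t) t) ∧
    Tendsto (w5m w m b0) atTop (nhds ((tau5 w m b0 - (w - m)) / 2)) ∧
    Tendsto (w5p w m b0) atTop (nhds ((tau5 w m b0 + (w - m)) / 2)) ∧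
    Tendsto (b5 w m b0) atTop (nhds 0) ∧
    ∃ C : ℝ, ∀ t ∈ Set.Ici (0 : ℝ),
      |w5m w m b0 t - (tau5 w m b0 - (w - m)) / 2| ≤ C * Real.exp (-(4 * tau5 w m b0 * t)) ∧
      |w5p w m b0 t - (tau5 w m b0 + (w - m)) / 2| ≤ C * Real.exp (-(4 * tau5 w m b0 * t)) ∧
      |b5 w m b0 t| ≤ C * Real.exp (-(2 * tau5 w m b0 * t)) :=
  stmt_5_general w m b0 hm hcond
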